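/- arXiv:1512.00066 — 2 statements merged into one kernel-verified Lean document; each statement's English description precedes it below -/
import Mathlib

section
/- If a weighted directed graph on n vertices has no negative-weight cycle, then the Bellman–Ford iteration converges in at most n−1 steps: P^{(n-1)} = P^{(n)} = P^{(r)} for all r ≥ n−1, and P^{(n-1)}_i is the true shortest-walk distance from the source s to vertex i. -/
/-!
By induction on `r`, `P r i` is the least weight of a walk from `s` to `i` with exactly `r`
edges; the zero diagonal lets a walk idle at a vertex, so this is antitone in `r`. A walk
with at least `n` edges repeats a vertex, and cutting out the closed subwalk between the two
visits does not increase its weight when no cycle is negative. So every walk from `s` to `i`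
is dominated by one with at most `n - 1` edges, and `P` is constant from `n - 1` on.
-/

open Finset Fin.NatCast

namespace BellmanFord

section CycleRemoval

variable {V β : Type*} [AddCommMonoid β] (A : V → V → β)

/-- `A i j` is the weight of the edge from `j` to `i`. -/
def walkWeight {m : ℕ} (v : Fin (m + 1) → V) : β :=
  ∑ k : Fin m, A (v k.succ) (v k.castSucc)

/-- Walks as sequences read up to index `m`: cutting out a closed subwalk is then a reindexing. -/
def seqWalkWeight (m : ℕ) (u : ℕ → V) : β :=
  ∑ k ∈ range m, A (u (k + 1)) (u k)

lemma seqWalkWeight_eq_walkWeight (m : ℕ) (u : ℕ → V) :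
    seqWalkWeight A m u = walkWeight A (fun k : Fin (m + 1) => u k) := by
  simp only [seqWalkWeight, walkWeight, Fin.val_succ, Fin.val_castSucc]
  exact (Fin.sum_univ_eq_sum_range (fun k => A (u (k + 1)) (u k)) m).symm

/-- The cast `ℕ → Fin (m + 1)` wraps around, but only the indices `≤ m` are read. -/
lemma walkWeight_eq_seqWalkWeight {m : ℕ} (v : Fin (m + 1) → V) :
    walkWeight A v = seqWalkWeight A m (fun k => v k) := by
  simp only [seqWalkWeight_eq_walkWeight, Fin.cast_val_eq_self]

lemma walkWeight_eq_walkWeight_init_add {m : ℕ} (w : Fin (m + 2) → V) :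
    walkWeight A w =
      walkWeight A (Fin.init w) + A (w (Fin.last (m + 1))) (Fin.init w (Fin.last m)) := by
  simp [walkWeight, Fin.sum_univ_castSucc, Fin.init]

lemma seqWalkWeight_add (a b : ℕ) (u : ℕ → V) :
    seqWalkWeight A (a + b) u = seqWalkWeight A a u + seqWalkWeight A b (fun k => u (a + k)) := by
  simp only [seqWalkWeight, sum_range_add, add_assoc]

def deleteSegment (a d : ℕ) (u : ℕ → V) : ℕ → V :=
  fun k => if k ≤ a then u k else u (k + d)

lemma deleteSegment_add {a d : ℕ} {u : ℕ → V} (h : u a = u (a + d)) (k : ℕ) :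
    deleteSegment a d u (a + k) = u (a + d + k) := by
  rcases k.eq_zero_or_pos with rfl | hk
  · simpa [deleteSegment] using h
  · simp only [deleteSegment, if_neg (by omega : ¬a + k ≤ a)]
    congr 1
    omega

lemma seqWalkWeight_deleteSegment_add {a d : ℕ} {u : ℕ → V} (h : u a = u (a + d)) (c : ℕ) :
    seqWalkWeight A (a + c) (deleteSegment a d u) + seqWalkWeight A d (fun k => u (a + k)) =
      seqWalkWeight A (a + d + c) u := by
  have hprefix : seqWalkWeight A a (deleteSegment a d u) = seqWalkWeight A a u :=
    sum_congr rfl fun k hk => by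
      have := mem_range.1 hk
      simp only [deleteSegment, if_pos (by omega : k + 1 ≤ a), if_pos (by omega : k ≤ a)]
  simp only [seqWalkWeight_add, hprefix, deleteSegment_add h]
  abel

variable [PartialOrder β] [IsOrderedAddMonoid β] [Fintype V]

lemma exists_shorter_seqWalk (hcyc : ∀ m (u : ℕ → V), u 0 = u m → 0 ≤ seqWalkWeight A m u)
    {m : ℕ} (u : ℕ → V) (hm : Fintype.card V ≤ m) :
    ∃ m' < m, ∃ u' : ℕ → V,
      u' 0 = u 0 ∧ u' m' = u m ∧ seqWalkWeight A m' u' ≤ seqWalkWeight A m u := by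
  obtain ⟨a, ha, b, hb, hab, hrep⟩ :
      ∃ a ∈ range (m + 1), ∃ b ∈ range (m + 1), a < b ∧ u a = u b := by
    obtain ⟨x, hx, y, hy, hxy, hrep⟩ := exists_ne_map_eq_of_card_lt_of_maps_to
      (s := range (m + 1)) (t := univ) (by simpa using Nat.lt_succ_of_le hm)
      (fun k _ => mem_coe.2 (mem_univ (u k)))
    exact hxy.lt_or_gt.elim (fun h => ⟨x, hx, y, hy, h, hrep⟩)
      fun h => ⟨y, hy, x, hx, h, hrep.symm⟩
  rw [mem_range] at ha hb
  obtain ⟨d, rfl⟩ := Nat.exists_eq_add_of_lt hab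
  obtain ⟨c, rfl⟩ := Nat.exists_eq_add_of_le (Nat.le_of_lt_succ hb)
  have hloop : u a = u (a + (d + 1)) := by rw [hrep]; congr 1
  refine ⟨a + c, by omega, deleteSegment a (d + 1) u, by simp [deleteSegment],
    by rw [deleteSegment_add hloop]; congr 1, ?_⟩
  have hcyc' : 0 ≤ seqWalkWeight A (d + 1) (fun k => u (a + k)) :=
    hcyc _ _ (by simpa using hloop)
  calc seqWalkWeight A (a + c) (deleteSegment a (d + 1) u)
      ≤ seqWalkWeight A (a + c) (deleteSegment a (d + 1) u)
          + seqWalkWeight A (d + 1) (fun k => u (a + k)) := le_add_of_nonneg_right hcyc'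
    _ = seqWalkWeight A (a + d + 1 + c) u := by
      rw [seqWalkWeight_deleteSegment_add A hloop, ← add_assoc]

lemma exists_short_seqWalk (hcyc : ∀ m (u : ℕ → V), u 0 = u m → 0 ≤ seqWalkWeight A m u)
    (m : ℕ) (u : ℕ → V) :
    ∃ m' < Fintype.card V, ∃ u' : ℕ → V,
      u' 0 = u 0 ∧ u' m' = u m ∧ seqWalkWeight A m' u' ≤ seqWalkWeight A m u := by
  induction m using Nat.strong_induction_on generalizing u with
  | _ m ih =>
    by_cases hm : m < Fintype.card V
    · exact ⟨m, hm, u, rfl, rfl, le_rfl⟩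
    obtain ⟨m', hm', u', h0, hm'u, hw⟩ := exists_shorter_seqWalk A hcyc u (not_lt.1 hm)
    obtain ⟨m'', hm'', u'', h0', hm''u, hw'⟩ := ih m' hm' u'
    exact ⟨m'', hm'', u'', h0'.trans h0, hm''u.trans hm'u, hw'.trans hw⟩

end CycleRemoval

section MinWalkWeight

variable {V α : Type*} [Fintype V] [DecidableEq V] [AddCommMonoid α] [LinearOrder α]
  (A : V → V → WithTop α) (s : V)

def minWalkWeight (m : ℕ) (i : V) : WithTop α :=
  univ.inf fun v : Fin (m + 1) → V =>
    if v 0 = s ∧ v (Fin.last m) = i then walkWeight A v else ⊤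

variable {A s}

lemma minWalkWeight_le_walkWeight {m : ℕ} {i : V} (v : Fin (m + 1) → V) (h0 : v 0 = s)
    (hi : v (Fin.last m) = i) : minWalkWeight A s m i ≤ walkWeight A v :=
  (Finset.inf_le (mem_univ v)).trans_eq (if_pos ⟨h0, hi⟩)

lemma le_minWalkWeight {m : ℕ} {i : V} {b : WithTop α}
    (h : ∀ v : Fin (m + 1) → V, v 0 = s → v (Fin.last m) = i → b ≤ walkWeight A v) :
    b ≤ minWalkWeight A s m i :=
  Finset.le_inf fun v _ => by
    split_ifs with hv
    exacts [h v hv.1 hv.2, le_top]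

variable (A s)

lemma minWalkWeight_zero (i : V) : minWalkWeight A s 0 i = if i = s then 0 else ⊤ := by
  split_ifs with hi
  · subst hi
    refine le_antisymm ?_ (le_minWalkWeight fun _ _ _ => by simp [walkWeight])
    simpa [walkWeight] using minWalkWeight_le_walkWeight (A := A) (m := 0) (fun _ => i) rfl rfl
  · exact top_le_iff.1 <| le_minWalkWeight fun v h0 hv => absurd (hv.symm.trans h0) hi

variable [IsOrderedAddMonoid α]

lemma add_finset_inf {ι : Type*} (a : WithTop α) (t : Finset ι) (f : ι → WithTop α) :
    a + t.inf f = t.inf fun x => a + f x :=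
  apply_inf_eq_inf_comp (fun x : WithTop α => a + x) (fun x y => (min_add_add_left a x y).symm)
    (WithTop.add_top a)

variable {A s} in
lemma le_add_minWalkWeight {m : ℕ} {i : V} {a b : WithTop α}
    (h : ∀ v : Fin (m + 1) → V, v 0 = s → v (Fin.last m) = i → b ≤ a + walkWeight A v) :
    b ≤ a + minWalkWeight A s m i := by
  rw [minWalkWeight, add_finset_inf]
  refine Finset.le_inf fun v _ => ?_
  split_ifs with hv
  exacts [h v hv.1 hv.2, by simp]

lemma minWalkWeight_succ (m : ℕ) (i : V) :
    minWalkWeight A s (m + 1) i = univ.inf fun j => A i j + minWalkWeight A s m j := by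
  refine le_antisymm (Finset.le_inf fun j _ => le_add_minWalkWeight fun v h0 hj => ?_)
    (le_minWalkWeight fun w h0 hi => ?_)
  · calc minWalkWeight A s (m + 1) i
        ≤ walkWeight A (Fin.snoc v i : Fin (m + 2) → V) :=
          minWalkWeight_le_walkWeight _ (by rw [← Fin.castSucc_zero, Fin.snoc_castSucc, h0])
            (by simp)
      _ = A i j + walkWeight A v := by
          simp [walkWeight_eq_walkWeight_init_add, hj, add_comm]
  · rw [walkWeight_eq_walkWeight_init_add, hi, add_comm]
    calc univ.inf (fun j => A i j + minWalkWeight A s m j)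
        ≤ A i (Fin.init w (Fin.last m)) + minWalkWeight A s m (Fin.init w (Fin.last m)) :=
          Finset.inf_le (mem_univ _)
      _ ≤ _ := add_le_add le_rfl
          (minWalkWeight_le_walkWeight _ (by simpa [Fin.init] using h0) rfl)

lemma bellmanFord_eq_minWalkWeight (P : ℕ → V → WithTop α)
    (hP0 : ∀ i, P 0 i = if i = s then 0 else ⊤)
    (hPS : ∀ r i, P (r + 1) i = univ.inf (fun j => A i j + P r j)) :
    P = minWalkWeight A s := by
  funext r i
  induction r generalizing i with
  | zero => rw [hP0, minWalkWeight_zero]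
  | succ r ih => simp only [hPS, ih, minWalkWeight_succ]

lemma minWalkWeight_antitone (hdiag : ∀ i, A i i = 0) : Antitone (minWalkWeight A s) :=
  antitone_nat_of_succ_le fun m i => by
    simpa [hdiag] using (minWalkWeight_succ A s m i).trans_le (Finset.inf_le (mem_univ i))

lemma minWalkWeight_le_walkWeight_of_card_le (hdiag : ∀ i, A i i = 0)
    (hcyc : ∀ m (u : ℕ → V), u 0 = u m → 0 ≤ seqWalkWeight A m u)
    {N : ℕ} (hN : Fintype.card V ≤ N + 1)
    {m : ℕ} {i : V} (v : Fin (m + 1) → V) (h0 : v 0 = s) (hi : v (Fin.last m) = i) :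
    minWalkWeight A s N i ≤ walkWeight A v := by
  obtain ⟨m', hm', u, hu0, hum, hw⟩ := exists_short_seqWalk A hcyc m (fun k => v k)
  calc minWalkWeight A s N i
      ≤ minWalkWeight A s m' i := minWalkWeight_antitone A s hdiag (by omega) i
    _ ≤ seqWalkWeight A m' u := by
        rw [seqWalkWeight_eq_walkWeight]
        exact minWalkWeight_le_walkWeight _ (by simpa [h0] using hu0)
          (by simpa [Fin.natCast_eq_last, hi] using hum)
    _ ≤ seqWalkWeight A m (fun k => v k) := hw
    _ = walkWeight A v := (walkWeight_eq_seqWalkWeight A v).symm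

lemma minWalkWeight_le_of_card_le (hdiag : ∀ i, A i i = 0)
    (hcyc : ∀ m (u : ℕ → V), u 0 = u m → 0 ≤ seqWalkWeight A m u)
    {N : ℕ} (hN : Fintype.card V ≤ N + 1) (m : ℕ) :
    minWalkWeight A s N ≤ minWalkWeight A s m := fun _ =>
  le_minWalkWeight fun v h0 hi =>
    minWalkWeight_le_walkWeight_of_card_le A s hdiag hcyc hN v h0 hi

end MinWalkWeight

end BellmanFord

open BellmanFord in
theorem bellman_ford_converges_general (n : ℕ) (s : Fin n)
    (A : Fin n → Fin n → WithTop ℤ) (hdiag : ∀ i, A i i = 0)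
    (hnoneg : ∀ (m : ℕ) (v : Fin (m + 1) → Fin n), v 0 = v (Fin.last m) →
      (0 : WithTop ℤ) ≤ ∑ k : Fin m, A (v k.succ) (v k.castSucc))
    (P : ℕ → Fin n → WithTop ℤ)
    (hP0 : ∀ i, P 0 i = if i = s then 0 else ⊤)
    (hPS : ∀ r i, P (r + 1) i = Finset.univ.inf (fun j => A i j + P r j)) :
    (∀ r : ℕ, n - 1 ≤ r → P r = P (n - 1)) ∧
    (∀ (i : Fin n) (m : ℕ) (v : Fin (m + 1) → Fin n), v 0 = s →
      v (Fin.last m) = i →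
      P (n - 1) i ≤ ∑ k : Fin m, A (v k.succ) (v k.castSucc)) ∧
    (∀ i : Fin n, P (n - 1) i =
      (Finset.range n).inf (fun m =>
        Finset.univ.inf (fun v : Fin (m + 1) → Fin n =>
          if v 0 = s ∧ v (Fin.last m) = i then
            ∑ k : Fin m, A (v k.succ) (v k.castSucc)
          else ⊤))) := by
  have hcyc : ∀ m (u : ℕ → Fin n), u 0 = u m → 0 ≤ seqWalkWeight A m u := fun m u h => by
    rw [seqWalkWeight_eq_walkWeight]
    exact hnoneg m (fun k : Fin (m + 1) => u k) (by simpa using h)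
  have hN : Fintype.card (Fin n) ≤ n - 1 + 1 := by rw [Fintype.card_fin]; omega
  obtain rfl := bellmanFord_eq_minWalkWeight A s P hP0 hPS
  refine ⟨fun r hr => le_antisymm (minWalkWeight_antitone A s hdiag hr)
      (minWalkWeight_le_of_card_le A s hdiag hcyc hN r),
    fun i m v h0 hi => minWalkWeight_le_walkWeight_of_card_le A s hdiag hcyc hN v h0 hi,
    fun i => le_antisymm ?_ ?_⟩
  · exact Finset.le_inf fun m _ => minWalkWeight_le_of_card_le A s hdiag hcyc hN m i
  · exact Finset.inf_le (f := fun m => minWalkWeight A s m i)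
      (mem_range.2 (Nat.sub_one_lt_of_lt i.pos))

/-- If the `n`-vertex graph has no negative-weight cycle (every closed walk has
nonnegative total weight), then Bellman–Ford converges in at most `n-1` steps:
`P r = P (n-1)` for all `r ≥ n-1`, `P (n-1) i` is a lower bound on the weight
of every walk from `s` to `i`, and `P (n-1) i` equals the minimum weight over
all walks from `s` to `i` with at most `n-1` edges, i.e. the true shortest-walk
distance. -/
theorem bellman_ford_converges (n : ℕ) (hn : 0 < n) (s : Fin n)
    (A : Fin n → Fin n → WithTop ℤ) (hdiag : ∀ i, A i i = 0)
    (hnoneg : ∀ (m : ℕ) (v : Fin (m + 1) → Fin n), v 0 = v (Fin.last m) →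
      (0 : WithTop ℤ) ≤ ∑ k : Fin m, A (v k.succ) (v k.castSucc))
    (P : ℕ → Fin n → WithTop ℤ)
    (hP0 : ∀ i, P 0 i = if i = s then 0 else ⊤)
    (hPS : ∀ r i, P (r + 1) i = Finset.univ.inf (fun j => A i j + P r j)) :
    (∀ r : ℕ, n - 1 ≤ r → P r = P (n - 1)) ∧
    (∀ (i : Fin n) (m : ℕ) (v : Fin (m + 1) → Fin n), v 0 = s →
      v (Fin.last m) = i →
      P (n - 1) i ≤ ∑ k : Fin m, A (v k.succ) (v k.castSucc)) ∧
    (∀ i : Fin n, P (n - 1) i =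
      (Finset.range n).inf (fun m =>
        Finset.univ.inf (fun v : Fin (m + 1) → Fin n =>
          if v 0 = s ∧ v (Fin.last m) = i then
            ∑ k : Fin m, A (v k.succ) (v k.castSucc)
          else ⊤))) :=
  bellman_ford_converges_general n s A hdiag hnoneg P hP0 hPS
end

section
/- If an n×n sparse matrix has exactly c dense columns (all n entries nonzero) and no other nonzeros, and a uniformly random permutation is applied to the columns before a cyclic distribution over a q₁×q₂ grid (q₂ dividing n), then each processor column-group receives a hypergeometric number of dense columns, and when c > q₂ log q₂, with high probability every processor owns Θ(c n /(q₁ q₂)) = Θ(z/q) nonzeros where z = cn and q = q₁q₂. -/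
/-!
Fix a column group `b` and let `k = ⌊2e·c/q₂⌋ + 1`. If `b` receives at least `k` dense columns,
some `k`-subset `S` of the dense columns is mapped into the `n/q₂` positions of `b`; for a fixed
`S` this happens for at most `(n/q₂)(n/q₂ - 1)⋯(n/q₂ - k + 1)·(n - k)! ≤ n!/q₂^k` permutations.
Summing over the `choose c k ≤ (e·c/k)^k ≤ (q₂/2)^k` choices of `S` leaves at most
`n!/2^k ≤ n!/q₂²` bad permutations, the last step because `k > 2e·log q₂` once `c > q₂ log q₂`.
A union bound over the `q₂` groups gives at most `n!/q₂` permutations overloading some group,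
and a processor row holds at most `⌈n/q₁⌉` matrix rows.
-/

open Finset Real
open scoped Nat

theorem Nat.card_filter_range_mod_eq {q a : ℕ} (n : ℕ) (ha : a < q) :
    #{i ∈ range n | i % q = a} = n / q + if a < n % q then 1 else 0 := by
  have hcount := Nat.count_modEq_card n (a.zero_le.trans_lt ha) a
  rw [Nat.mod_eq_of_lt ha, Nat.count_eq_card_filter_range] at hcount
  rw [← hcount]
  simp only [Nat.ModEq, Nat.mod_eq_of_lt ha]

theorem Nat.card_filter_range_mod_eq_le {q a : ℕ} (n : ℕ) (ha : a < q) :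
    #{i ∈ range n | i % q = a} ≤ (n + q - 1) / q := by
  rw [card_filter_range_mod_eq n ha]
  have hq : 0 < q := a.zero_le.trans_lt ha
  split_ifs with h
  · rw [Nat.le_div_iff_mul_le hq]
    have := Nat.div_add_mod n q
    rw [add_one_mul, mul_comm]
    omega
  · exact Nat.div_le_div_right (by omega)

theorem Fin.card_filter_val_mod_eq_le {n q a : ℕ} (hqn : q ∣ n) (ha : a < q) :
    #{x : Fin n | (x : ℕ) % q = a} ≤ n / q := by
  calc _ ≤ #{i ∈ range n | i % q = a} :=
        card_le_card_of_injOn Fin.val (fun x hx => by simp_all) Fin.val_injective.injOn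
    _ = n / q := by simp [Nat.card_filter_range_mod_eq n ha, Nat.mod_eq_zero_of_dvd hqn]

theorem Nat.descFactorial_mul_pow_le {m q n : ℕ} (h : m * q ≤ n) (hq : 0 < q) (k : ℕ) :
    m.descFactorial k * q ^ k ≤ n.descFactorial k := by
  induction k with
  | zero => simp
  | succ k ih =>
    have hstep : (m - k) * q ≤ n - k := by
      rw [Nat.sub_mul]
      exact tsub_le_tsub h (Nat.le_mul_of_pos_right k hq)
    calc m.descFactorial (k + 1) * q ^ (k + 1)
        = ((m - k) * q) * (m.descFactorial k * q ^ k) := by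
          rw [Nat.descFactorial_succ, pow_succ]; ring
      _ ≤ (n - k) * n.descFactorial k := Nat.mul_le_mul hstep ih

theorem Nat.choose_le_exp_mul_div_pow (c k : ℕ) :
    (c.choose k : ℝ) ≤ (exp 1 * c / k) ^ k := by
  rcases k.eq_zero_or_pos with rfl | hk
  · simp
  have hk' : (0 : ℝ) < k := Nat.cast_pos.mpr hk
  calc (c.choose k : ℝ) ≤ (c : ℝ) ^ k / k ! := Nat.choose_le_pow_div k c
    _ = ((c : ℝ) / k) ^ k * ((k : ℝ) ^ k / k !) := by rw [div_pow]; field_simp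
    _ ≤ ((c : ℝ) / k) ^ k * exp k := by gcongr; exact pow_div_factorial_le_exp _ hk'.le k
    _ = (exp 1 * c / k) ^ k := by
        rw [← exp_one_pow, ← mul_pow]; ring_nf

theorem sq_le_two_pow_of_two_mul_exp_one_mul_log_lt {q k : ℕ}
    (h : 2 * exp 1 * log q < k) : (q : ℝ) ^ 2 ≤ 2 ^ k := by
  have hlog2 : 1 ≤ exp 1 * log 2 := by
    nlinarith [log_two_gt_d9, add_one_le_exp (1 : ℝ)]
  have hexponent : log ((q : ℝ) ^ 2) ≤ k * log 2 := by
    rw [log_pow]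
    push_cast
    nlinarith [mul_le_mul_of_nonneg_left hlog2 (log_natCast_nonneg q),
      mul_lt_mul_of_pos_right h (log_pos one_lt_two)]
  calc (q : ℝ) ^ 2 ≤ exp (log ((q : ℝ) ^ 2)) := le_exp_log _
    _ ≤ exp (k * log 2) := exp_le_exp.mpr hexponent
    _ = 2 ^ k := by rw [mul_comm, exp_mul, exp_log two_pos]; norm_num

namespace Equiv.Perm

variable {α : Type*} [Fintype α] [DecidableEq α]

theorem card_filter_forall_mem_apply_eq_self (S : Finset α) :
    #{ρ : Perm α | ∀ j ∈ S, ρ j = j} = (Fintype.card α - #S)! :=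
  calc _ = Fintype.card {ρ : Perm α // ∀ a, ¬a ∉ S → ρ a = a} := by
        rw [← Fintype.card_subtype]
        exact Fintype.card_congr (Equiv.subtypeEquivRight fun ρ => by simp only [not_not])
    _ = Fintype.card (Perm {a // a ∉ S}) :=
        (Fintype.card_congr (Perm.subtypeEquivSubtypePerm _)).symm
    _ = _ := by rw [Fintype.card_perm, Fintype.card_subtype_compl, Fintype.card_coe]

theorem card_filter_forall_apply_eq_le (S : Finset α) (f : S → α) :
    #{σ : Perm α | ∀ j : S, σ j = f j} ≤ (Fintype.card α - #S)! := by
  rcases (filter (fun σ : Perm α => ∀ j : S, σ j = f j) univ).eq_empty_or_nonempty with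
    hempty | ⟨τ, hτ⟩
  · rw [hempty, card_empty]
    exact Nat.zero_le _
  rw [← card_filter_forall_mem_apply_eq_self S]
  refine card_le_card_of_injOn (τ⁻¹ * ·) (fun σ hσ => ?_) (mul_right_injective _).injOn
  simp only [coe_filter, mem_filter, mem_univ, true_and] at hσ hτ ⊢
  intro j hj
  rw [mul_apply, hσ ⟨j, hj⟩, ← hτ ⟨j, hj⟩, inv_eq_iff_eq]

theorem card_filter_mapsTo_le (S T : Finset α) :
    #{σ : Perm α | ∀ j ∈ S, σ j ∈ T} ≤ (#T).descFactorial #S * (Fintype.card α - #S)! := by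
  have hcover : filter (fun σ : Perm α => ∀ j ∈ S, σ j ∈ T) univ ⊆
      univ.biUnion fun e : S ↪ T => filter (fun σ : Perm α => ∀ j : S, σ j = e j) univ := by
    intro σ hσ
    simp only [mem_filter, mem_univ, true_and] at hσ
    simp only [mem_biUnion, mem_univ, mem_filter, true_and]
    exact ⟨⟨fun j => ⟨σ j, hσ j j.2⟩, fun i j hij => Subtype.ext (σ.injective congr(($hij).1))⟩,
      fun j => rfl⟩
  calc _ ≤ ∑ e : S ↪ T, #{σ : Perm α | ∀ j : S, σ j = e j} :=
        (card_le_card hcover).trans card_biUnion_le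
    _ ≤ ∑ _e : S ↪ T, (Fintype.card α - #S)! :=
        sum_le_sum fun e _ => card_filter_forall_apply_eq_le S _
    _ = _ := by simp [Fintype.card_embedding_eq]

theorem card_filter_le_card_filter_apply_mem_le (C T : Finset α) (k : ℕ) :
    #{σ : Perm α | k ≤ #{j ∈ C | σ j ∈ T}} ≤
      (#C).choose k * ((#T).descFactorial k * (Fintype.card α - k)!) := by
  have hcover : filter (fun σ : Perm α => k ≤ #{j ∈ C | σ j ∈ T}) univ ⊆
      (C.powersetCard k).biUnion fun S => filter (fun σ : Perm α => ∀ j ∈ S, σ j ∈ T) univ := by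
    intro σ hσ
    obtain ⟨S, hSC, rfl⟩ := exists_subset_card_eq (mem_filter.mp hσ).2
    simp only [mem_biUnion, mem_powersetCard, mem_filter, mem_univ, true_and]
    exact ⟨S, ⟨hSC.trans (filter_subset _ _), rfl⟩, fun j hj => (mem_filter.mp (hSC hj)).2⟩
  calc _ ≤ ∑ S ∈ C.powersetCard k, #{σ : Perm α | ∀ j ∈ S, σ j ∈ T} :=
        (card_le_card hcover).trans card_biUnion_le
    _ ≤ ∑ _S ∈ C.powersetCard k, (#T).descFactorial k * (Fintype.card α - k)! :=
        sum_le_sum fun S hS => (mem_powersetCard.mp hS).2 ▸ card_filter_mapsTo_le S T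
    _ = _ := by rw [sum_const, card_powersetCard, smul_eq_mul]

end Equiv.Perm

theorem card_perm_le_card_filter_mod_eq_le {n q k : ℕ} (hq : 2 ≤ q) (hqn : q ∣ n)
    (C : Finset (Fin n)) (hc : q * log q < #C) (hk : 2 * exp 1 * #C / q < k) (b : Fin q) :
    (#{σ : Equiv.Perm (Fin n) | k ≤ #{j ∈ C | (σ j : ℕ) % q = b}} : ℝ) ≤ n ! / q ^ 2 := by
  set c := #C
  set T : Finset (Fin n) := {x | (x : ℕ) % q = b}
  have hq0 : (0 : ℝ) < q := by positivity
  have hcount : #{σ : Equiv.Perm (Fin n) | k ≤ #{j ∈ C | (σ j : ℕ) % q = b}} ≤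
      c.choose k * ((n / q).descFactorial k * (n - k)!) := by
    have hT : ∀ σ : Equiv.Perm (Fin n),
        #{j ∈ C | (σ j : ℕ) % q = b} = #{j ∈ C | σ j ∈ T} := by
      intro σ
      simp only [T, mem_filter, mem_univ, true_and]
    simp only [hT]
    refine (Equiv.Perm.card_filter_le_card_filter_apply_mem_le C T k).trans ?_
    rw [Fintype.card_fin]
    exact Nat.mul_le_mul_left _ (Nat.mul_le_mul_right _
      (Nat.descFactorial_le _ (Fin.card_filter_val_mod_eq_le hqn b.isLt)))
  have hchoose : (c.choose k : ℝ) ≤ ((q : ℝ) / 2) ^ k := by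
    refine (Nat.choose_le_exp_mul_div_pow c k).trans (pow_le_pow_left₀ (by positivity) ?_ k)
    have hk0 : (0 : ℝ) < k := (by positivity : (0 : ℝ) ≤ 2 * exp 1 * c / q).trans_lt hk
    rw [div_lt_iff₀ hq0] at hk
    rw [div_le_div_iff₀ hk0 two_pos]
    linarith
  have hdesc : ((n / q).descFactorial k : ℝ) * q ^ k ≤ n.descFactorial k := by
    exact_mod_cast Nat.descFactorial_mul_pow_le (Nat.div_mul_le_self n q) (by omega) k
  have hfact : ((n - k)! : ℝ) * n.descFactorial k ≤ n ! := by
    rcases le_or_gt k n with hkn | hkn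
    · exact_mod_cast (Nat.factorial_mul_descFactorial hkn).le
    · simp [Nat.descFactorial_eq_zero_iff_lt.mpr hkn]
  have hsq : (q : ℝ) ^ 2 ≤ 2 ^ k := by
    refine sq_le_two_pow_of_two_mul_exp_one_mul_log_lt (hk.trans_le' ?_)
    rw [le_div_iff₀ hq0]
    nlinarith [exp_pos 1]
  calc _ ≤ (c.choose k : ℝ) * ((n / q).descFactorial k * (n - k)!) := by exact_mod_cast hcount
    _ ≤ ((q : ℝ) / 2) ^ k * (n.descFactorial k / q ^ k * (n - k)!) := by
        gcongr
        rwa [le_div_iff₀ (by positivity)]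
    _ = (n - k)! * n.descFactorial k / 2 ^ k := by
        rw [div_pow]
        field_simp
    _ ≤ n ! / q ^ 2 := by
        gcongr

theorem card_perm_forall_card_filter_mod_eq_le {n q : ℕ} (hq : 2 ≤ q) (hqn : q ∣ n)
    (C : Finset (Fin n)) (hc : q * log q < #C) :
    (1 - 1 / q : ℝ) * n ! ≤ #{σ : Equiv.Perm (Fin n) | ∀ b : Fin q,
      (#{j ∈ C | (σ j : ℕ) % q = b} : ℝ) ≤ 2 * exp 1 * #C / q} := by
  set x : ℝ := 2 * exp 1 * #C / q
  set k := ⌊x⌋₊ + 1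
  have hk : x < k := by exact_mod_cast Nat.lt_floor_add_one x
  have hbad : filter (fun σ : Equiv.Perm (Fin n) => ¬∀ b : Fin q,
        (#{j ∈ C | (σ j : ℕ) % q = b} : ℝ) ≤ x) univ ⊆
      univ.biUnion fun b : Fin q =>
        filter (fun σ : Equiv.Perm (Fin n) => k ≤ #{j ∈ C | (σ j : ℕ) % q = b}) univ := by
    intro σ hσ
    simp only [mem_filter, mem_univ, true_and, not_forall, not_le, mem_biUnion] at hσ ⊢
    obtain ⟨b, hb⟩ := hσ
    exact ⟨b, (Nat.floor_lt (by positivity)).mpr hb⟩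
  have hsplit := card_filter_add_card_filter_not (s := (univ : Finset (Equiv.Perm (Fin n))))
    fun σ => ∀ b : Fin q, (#{j ∈ C | (σ j : ℕ) % q = b} : ℝ) ≤ x
  rw [card_univ, Fintype.card_perm, Fintype.card_fin] at hsplit
  have hbad_card : (#{σ : Equiv.Perm (Fin n) | ¬∀ b : Fin q,
      (#{j ∈ C | (σ j : ℕ) % q = b} : ℝ) ≤ x} : ℝ) ≤ n ! / q :=
    calc _ ≤ ∑ b : Fin q,
            (#{σ : Equiv.Perm (Fin n) | k ≤ #{j ∈ C | (σ j : ℕ) % q = b}} : ℝ) := by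
          exact_mod_cast (card_le_card hbad).trans card_biUnion_le
      _ ≤ ∑ _b : Fin q, (n ! / q ^ 2 : ℝ) :=
          sum_le_sum fun b _ => card_perm_le_card_filter_mod_eq_le hq hqn C hc hk b
      _ = n ! / q := by
          rw [sum_const, card_univ, Fintype.card_fin, nsmul_eq_mul]
          field_simp
  rw [← Nat.cast_inj (R := ℝ), Nat.cast_add] at hsplit
  rw [sub_mul, one_div_mul_eq_div]
  linarith

theorem random_permutation_load_balance_general (n c q₁ q₂ : ℕ)
    (hq₂ : 2 ≤ q₂) (hdvd : q₂ ∣ n)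
    (C : Finset (Fin n)) (hC : C.card = c)
    (hc : (q₂ : ℝ) * Real.log q₂ < c) :
    let good : Finset (Equiv.Perm (Fin n)) :=
      Finset.univ.filter (fun σ => ∀ b : Fin q₂,
        ((C.filter (fun j => (σ j : ℕ) % q₂ = (b : ℕ))).card : ℝ) ≤
          2 * Real.exp 1 * c / q₂)
    ((1 : ℝ) - 1 / q₂) * (Nat.factorial n) ≤ good.card ∧
    (∀ σ ∈ good, ∀ (a : Fin q₁) (b : Fin q₂),
      ((((Finset.range n).filter (fun i => i % q₁ = (a : ℕ))).card *
        (C.filter (fun j => (σ j : ℕ) % q₂ = (b : ℕ))).card : ℕ) : ℝ) ≤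
        (2 * Real.exp 1 * c / q₂) * (((n + q₁ - 1) / q₁ : ℕ) : ℝ)) := by
  intro good
  subst hC
  refine ⟨card_perm_forall_card_filter_mod_eq_le hq₂ hdvd C hc, fun σ hσ a b => ?_⟩
  have hrow : (#{i ∈ range n | i % q₁ = a} : ℝ) ≤ ((n + q₁ - 1) / q₁ : ℕ) := by
    exact_mod_cast Nat.card_filter_range_mod_eq_le n a.isLt
  rw [Nat.cast_mul, mul_comm]
  exact mul_le_mul ((mem_filter.mp hσ).2 b) hrow (Nat.cast_nonneg _) (by positivity)

/-- Load balance after a random column permutation: an `n × n` matrix has `c`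
dense columns `C` (all entries nonzero) and no other nonzeros; a uniformly
random permutation `σ` of the columns is applied before a cyclic distribution
over a `q₁ × q₂` grid with `q₂ ∣ n`. If `c > q₂ log q₂`, then with probability
at least `1 - 1/q₂` (counted over all `n!` permutations), every processor
column group `b` receives at most `2e·c/q₂` dense columns, and hence every
processor `(a,b)` owns at most `(2e·c/q₂)·⌈n/q₁⌉ = O(cn/(q₁q₂)) = O(z/q)`
nonzeros. -/
theorem random_permutation_load_balance (n c q₁ q₂ : ℕ)
    (hq₁ : 0 < q₁) (hq₂ : 2 ≤ q₂) (hdvd : q₂ ∣ n)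
    (C : Finset (Fin n)) (hC : C.card = c)
    (hc : (q₂ : ℝ) * Real.log q₂ < c) :
    let good : Finset (Equiv.Perm (Fin n)) :=
      Finset.univ.filter (fun σ => ∀ b : Fin q₂,
        ((C.filter (fun j => (σ j : ℕ) % q₂ = (b : ℕ))).card : ℝ) ≤
          2 * Real.exp 1 * c / q₂)
    ((1 : ℝ) - 1 / q₂) * (Nat.factorial n) ≤ good.card ∧
    (∀ σ ∈ good, ∀ (a : Fin q₁) (b : Fin q₂),
      ((((Finset.range n).filter (fun i => i % q₁ = (a : ℕ))).card *
        (C.filter (fun j => (σ j : ℕ) % q₂ = (b : ℕ))).card : ℕ) : ℝ) ≤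
        (2 * Real.exp 1 * c / q₂) * (((n + q₁ - 1) / q₁ : ℕ) : ℝ)) :=
  random_permutation_load_balance_general n c q₁ q₂ hq₂ hdvd C hC hc
end
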